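/- Let b be a globally bounded Lipschitz vector field on ℝ^d with flow Φ, let α ∈ C¹_c((0,1)) and β ∈ C¹_c(ℝ^d), and set ψ(t,x) := α(t)·β(Φ(−t, x)). Then although ψ is in general only Lipschitz, at every point (t,x) ∈ (0,1) × ℝ^d the directional derivative of ψ in the direction (1, b(x)) exists and equals α'(t)·β(Φ(−t, x)). That is, lim_{h→0} (ψ(t+h, x + h b(x)) − ψ(t,x))/h = α'(t) β(Φ(−t,x)). -/

import Mathlib

/-!
Along the characteristic `h ↦ (t + h, x + h b(x))` the point `Φ(−(t+h), x + h b(x))` moves only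
by `o(h)`: by the semigroup law `Φ(−t, x) = Φ(−(t+h), Φ(h, x))`, the maps `Φ(−(t+h), ·)` are
Lipschitz uniformly for small `h` (Gronwall), and `Φ(h, x) − x − h b(x) = o(h)`. So `β` of that
point has derivative zero at `h = 0`, and the product rule leaves only `α'(t) β(Φ(−t, x))`.
-/

open Set Asymptotics Topology

section Flow

variable {E : Type*} [NormedAddCommGroup E] [NormedSpace ℝ E]
  {b : E → E} {Φ : ℝ → E → E} {K : NNReal}

theorem flow_add (hLip : LipschitzWith K b) (hΦ0 : ∀ x, Φ 0 x = x)
    (hODE : ∀ t x, HasDerivAt (fun s => Φ s x) (b (Φ t x)) t) (s u : ℝ) (x : E) :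
    Φ s (Φ u x) = Φ (s + u) x := by
  have hshift : ∀ r, HasDerivAt (fun r => Φ (r + u) x) (b (Φ (r + u) x)) r := fun r =>
    (hODE (r + u) x).comp_add_const r u
  have := ODE_solution_unique_univ (v := fun _ => b) (s := fun _ => univ) (t₀ := 0)
    (f := fun r => Φ r (Φ u x)) (g := fun r => Φ (r + u) x)
    (fun _ => hLip.lipschitzOnWith) (fun r => ⟨hODE r _, trivial⟩)
    (fun r => ⟨hshift r, trivial⟩) (by simp [hΦ0])
  exact congrFun this s

theorem dist_flow_le_of_nonneg (hLip : LipschitzWith K b)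
    (hODE : ∀ t x, HasDerivAt (fun s => Φ s x) (b (Φ t x)) t)
    {s : ℝ} (hs : 0 ≤ s) (x y : E) :
    dist (Φ s x) (Φ s y) ≤ dist (Φ 0 x) (Φ 0 y) * Real.exp (K * s) := by
  simpa using dist_le_of_trajectories_ODE (v := fun _ => b) (a := 0) (b := s)
    (f := fun r => Φ r x) (g := fun r => Φ r y) (fun _ => hLip)
    (fun r _ => (hODE r x).continuousAt.continuousWithinAt)
    (fun r _ => (hODE r x).hasDerivWithinAt)
    (fun r _ => (hODE r y).continuousAt.continuousWithinAt)
    (fun r _ => (hODE r y).hasDerivWithinAt) le_rfl s ⟨hs, le_rfl⟩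

theorem dist_flow_le (hLip : LipschitzWith K b)
    (hODE : ∀ t x, HasDerivAt (fun s => Φ s x) (b (Φ t x)) t) (s : ℝ) (x y : E) :
    dist (Φ s x) (Φ s y) ≤ dist (Φ 0 x) (Φ 0 y) * Real.exp (K * |s|) := by
  rcases le_or_gt 0 s with hs | hs
  · simpa [abs_of_nonneg hs] using dist_flow_le_of_nonneg hLip hODE hs x y
  · -- `r ↦ Φ (-r)` is the flow of `-b`, which is `K`-Lipschitz too
    have hrev : ∀ t x, HasDerivAt (fun r => Φ (-r) x) (-b (Φ (-t) x)) t := fun t x => by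
      simpa [Function.comp_def] using (hODE (-t) x).scomp t (hasDerivAt_neg t)
    simpa [abs_of_neg hs] using
      dist_flow_le_of_nonneg (b := fun z => -b z) (Φ := fun r => Φ (-r)) hLip.neg hrev
        (neg_nonneg.2 hs.le) x y

theorem hasDerivAt_flow_neg_along_characteristic (hLip : LipschitzWith K b)
    (hΦ0 : ∀ x, Φ 0 x = x) (hODE : ∀ t x, HasDerivAt (fun s => Φ s x) (b (Φ t x)) t)
    (t : ℝ) (x : E) :
    HasDerivAt (fun h : ℝ => Φ (-(t + h)) (x + h • b x)) 0 0 := by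
  rw [hasDerivAt_iff_isLittleO_nhds_zero]
  simp only [zero_add, add_zero, zero_smul, smul_zero, sub_zero]
  have hflow : (fun h : ℝ => Φ h x - x - h • b x) =o[𝓝 0] fun h => h := by
    simpa [hΦ0] using hasDerivAt_iff_isLittleO_nhds_zero.1 (hODE 0 x)
  have hgrowth : (fun h : ℝ => Real.exp (K * |-(t + h)|)) =O[𝓝 0] fun _ => (1 : ℝ) :=
    (Continuous.tendsto (by fun_prop) 0).isBigO_one ℝ
  have hdist : ∀ h : ℝ, ‖Φ (-(t + h)) (x + h • b x) - Φ (-t) x‖ ≤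
      ‖Real.exp (K * |-(t + h)|) * ‖Φ h x - x - h • b x‖‖ := fun h => by
    have hsemigroup : Φ (-(t + h)) (Φ h x) = Φ (-t) x := by
      rw [flow_add hLip hΦ0 hODE]; ring_nf
    have := dist_flow_le hLip hODE (-(t + h)) (x + h • b x) (Φ h x)
    rw [hsemigroup, hΦ0, hΦ0, dist_eq_norm, dist_eq_norm, ← norm_neg (x + _ - _),
      show -(x + h • b x - Φ h x) = Φ h x - x - h • b x by abel] at this
    rwa [norm_mul, norm_norm, Real.norm_of_nonneg (Real.exp_pos _).le, mul_comm]
  simpa using (isBigO_of_le _ hdist).trans_isLittleO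
    ((hgrowth.mul_isLittleO hflow.norm_left).congr_right (by simp))

end Flow

theorem lineDeriv_of_transported_testFunction_general
    {d : ℕ} (b : (Fin d → ℝ) → (Fin d → ℝ)) (Φ : ℝ → (Fin d → ℝ) → (Fin d → ℝ))
    (K : NNReal) (hLip : LipschitzWith K b)
    (hΦ0 : ∀ x, Φ 0 x = x)
    (hODE : ∀ t x, HasDerivAt (fun s => Φ s x) (b (Φ t x)) t)
    (α : ℝ → ℝ) (hα : ContDiff ℝ 1 α)
    (β : (Fin d → ℝ) → ℝ) (hβ : ContDiff ℝ 1 β) :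
    ∀ (t : ℝ), t ∈ Set.Ioo (0 : ℝ) 1 → ∀ (x : Fin d → ℝ),
      HasLineDerivAt ℝ (fun p : ℝ × (Fin d → ℝ) => α p.1 * β (Φ (-p.1) p.2))
        (deriv α t * β (Φ (-t) x)) (t, x) ((1 : ℝ), b x) := by
  intro t _ x
  have hα' : HasDerivAt (fun h => α (t + h)) (deriv α t) 0 := by
    simpa using ((hα.differentiable one_ne_zero) (t + 0)).hasDerivAt.comp_const_add t 0
  have hβ' : HasDerivAt (fun h => β (Φ (-(t + h)) (x + h • b x))) 0 0 := by
    have := ((hβ.differentiable one_ne_zero) _).hasFDerivAt.comp_hasDerivAt 0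
      (hasDerivAt_flow_neg_along_characteristic hLip hΦ0 hODE t x)
    rwa [map_zero] at this
  have hproduct : HasDerivAt (fun h => α (t + h) * β (Φ (-(t + h)) (x + h • b x)))
      (deriv α t * β (Φ (-t) x)) 0 := by
    simpa using hα'.fun_mul hβ'
  simpa [HasLineDerivAt] using hproduct

/-- **Everywhere existence of the directional derivative of the Lipschitz test function
`ψ(t,x) = α(t) β(Φ(−t, x))` along `(1, b(x))`.**
Here `b` is a globally bounded Lipschitz vector field with flow `Φ`,
`α ∈ C¹_c((0,1))`, `β ∈ C¹_c(ℝ^d)`. At every `(t,x) ∈ (0,1) × ℝ^d` the line derivative of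
`ψ` in the direction `(1, b x)` exists and equals `α'(t) β(Φ(−t,x))`. -/
theorem lineDeriv_of_transported_testFunction
    {d : ℕ} (b : (Fin d → ℝ) → (Fin d → ℝ)) (Φ : ℝ → (Fin d → ℝ) → (Fin d → ℝ))
    (K : NNReal) (hLip : LipschitzWith K b)
    (C : ℝ) (hbound : ∀ x, ‖b x‖ ≤ C)
    (hΦ0 : ∀ x, Φ 0 x = x)
    (hODE : ∀ t x, HasDerivAt (fun s => Φ s x) (b (Φ t x)) t)
    (α : ℝ → ℝ) (hα : ContDiff ℝ 1 α) (hαc : HasCompactSupport α)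
    (hαs : tsupport α ⊆ Set.Ioo (0 : ℝ) 1)
    (β : (Fin d → ℝ) → ℝ) (hβ : ContDiff ℝ 1 β) (hβc : HasCompactSupport β) :
    ∀ (t : ℝ), t ∈ Set.Ioo (0 : ℝ) 1 → ∀ (x : Fin d → ℝ),
      HasLineDerivAt ℝ (fun p : ℝ × (Fin d → ℝ) => α p.1 * β (Φ (-p.1) p.2))
        (deriv α t * β (Φ (-t) x)) (t, x) ((1 : ℝ), b x) :=
  lineDeriv_of_transported_testFunction_general b Φ K hLip hΦ0 hODE α hα β hβ
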